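/- arXiv:2403.03867 — 4 statements merged into one kernel-verified Lean document; each statement's English description precedes it below -/
import Mathlib

section
/- With updates u_{t+1}=u_t+ηL(t)v_t, v_{t+1}=v_t+ηL(t)u_t where L(t)=exp(-⟨u_t,v_t⟩): if 0 < ηL(t) < 1 and u_t + v_t ≠ 0, then ⟨u_{t+1},v_{t+1}⟩ > ⟨u_t,v_t⟩. -/
/-!
With `a = ηL`, the increment of `⟪u, v⟫` is `a (a - 2) ⟪u, v⟫ + a ‖u + v‖²`. When `⟪u, v⟫ ≤ 0`
both terms are nonnegative for `0 < a ≤ 2` and the second is positive since `u + v ≠ 0`; when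
`⟪u, v⟫ > 0` the increment is `a (‖u‖² + ‖v‖²) + a² ⟪u, v⟫ > 0`.
-/

open RealInnerProductSpace

section

variable {E : Type*} [NormedAddCommGroup E] [InnerProductSpace ℝ E]

theorem inner_add_smul_add_smul_sub_inner (a : ℝ) (u v : E) :
    ⟪u + a • v, v + a • u⟫ - ⟪u, v⟫ = a * (a - 2) * ⟪u, v⟫ + a * ‖u + v‖ ^ 2 := by
  simp only [norm_add_sq_real, inner_add_left, inner_add_right, real_inner_smul_left,
    real_inner_smul_right, real_inner_self_eq_norm_sq, real_inner_comm v u]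
  ring

theorem inner_lt_inner_add_smul_add_smul {a : ℝ} (ha : 0 < a) (ha₂ : a ≤ 2) {u v : E}
    (huv : u + v ≠ 0) : ⟪u, v⟫ < ⟪u + a • v, v + a • u⟫ := by
  rw [← sub_pos, inner_add_smul_add_smul_sub_inner]
  rcases le_or_gt ⟪u, v⟫ 0 with hnonpos | hpos
  · have hcross : 0 ≤ a * (a - 2) * ⟪u, v⟫ :=
      mul_nonneg_of_nonpos_of_nonpos (mul_nonpos_of_nonneg_of_nonpos ha.le (by linarith)) hnonpos
    have hsq : 0 < a * ‖u + v‖ ^ 2 := by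
      have := norm_pos_iff.mpr huv
      positivity
    linarith
  · have hexpand : a * (a - 2) * ⟪u, v⟫ + a * ‖u + v‖ ^ 2
        = a * (‖u‖ ^ 2 + ‖v‖ ^ 2) + a ^ 2 * ⟪u, v⟫ := by
      rw [norm_add_sq_real]
      ring
    rw [hexpand]
    positivity

end

theorem gd_inner_increases_general (d : ℕ) (η : ℝ)
    (u v u' v' : EuclideanSpace ℝ (Fin d))
    (L : ℝ)
    (hu : u' = u + (η * L) • v)
    (hv : v' = v + (η * L) • u)
    (hstep : 0 < η * L) (hstep' : η * L < 1)
    (hsum : u + v ≠ 0) :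
    (inner ℝ u' v' : ℝ) > (inner ℝ u v : ℝ) := by
  subst hu hv
  exact inner_lt_inner_add_smul_add_smul hstep (by linarith) hsum

/-- If `0 < ηL(t) < 1` and `uₜ + vₜ ≠ 0`, the inner product `⟨uₜ,vₜ⟩` strictly
increases after one gradient descent step on `L(u,v) = exp(-⟨u,v⟩)`. -/
theorem gd_inner_increases (d : ℕ) (η : ℝ)
    (u v u' v' : EuclideanSpace ℝ (Fin d))
    (L : ℝ) (hL : L = Real.exp (-(inner ℝ u v : ℝ)))
    (hu : u' = u + (η * L) • v)
    (hv : v' = v + (η * L) • u)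
    (hstep : 0 < η * L) (hstep' : η * L < 1)
    (hsum : u + v ≠ 0) :
    (inner ℝ u' v' : ℝ) > (inner ℝ u v : ℝ) :=
  gd_inner_increases_general d η u v u' v' L hu hv hstep hstep' hsum
end

section
/- Let C = {0,1}^m, fix a concept index i, and let g : C → ℝ^d, f : D → ℝ^d where D̂ = {d ∈ {⋄,0,1}^m : d_i = ⋄}. Suppose for every c ∈ C and d ∈ D̂, ln(p̂(c_{i→0}|d)/p̂(c_{i→1}|d)) = α for a constant α independent of c and d, where p̂(c|d) = softmax(f(d)^T g(c)). Let Π_i be the orthogonal projection onto span{f(d) : d ∈ D̂}. Then the vectors Π_i(g(c_{i→1}) − g(c_{i→0})) over all c ∈ C are pairwise parallel (each equals α times a fixed vector independent of c). -/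
/-!
For every context `d` with `d i = ⋄` the softmax normaliser cancels in the log-odds, so
`⟪f d, g(c_{i→1}) − g(c_{i→0})⟫ = −α`. Thus all steering vectors have the same inner products
with the spanning set `{f d}`, hence the same projection onto its span; for `α = 0` they are orthogonal to it.
-/

open Submodule

theorem Real.log_softmax_div_softmax {ι : Type*} [Fintype ι] [Nonempty ι] (s : ι → ℝ)
    (j k : ι) :
    Real.log ((Real.exp (s j) / ∑ l, Real.exp (s l)) / (Real.exp (s k) / ∑ l, Real.exp (s l)))
      = s j - s k := by
  have hZ : (∑ l, Real.exp (s l)) ≠ 0 :=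
    (Finset.sum_pos (fun l _ => Real.exp_pos (s l)) Finset.univ_nonempty).ne'
  rw [div_div_div_cancel_right₀ hZ, ← Real.exp_sub, Real.log_exp]

section Orthogonal

variable {𝕜 E : Type*} [RCLike 𝕜] [NormedAddCommGroup E] [InnerProductSpace 𝕜 E]

theorem Submodule.mem_orthogonal_span_iff (s : Set E) (v : E) :
    v ∈ (span 𝕜 s)ᗮ ↔ ∀ u ∈ s, inner 𝕜 u v = 0 := by
  rw [mem_orthogonal]
  refine ⟨fun h u hu => h u (subset_span hu), fun h u hu => ?_⟩
  induction hu using span_induction with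
  | mem x hx => exact h x hx
  | zero => exact inner_zero_left v
  | add x y _ _ hx hy => rw [inner_add_left, hx, hy, add_zero]
  | smul r x _ hx => rw [inner_smul_left, hx, mul_zero]

theorem Submodule.orthogonalProjectionOnto_span_eq_of_inner_eq {s : Set E}
    [(span 𝕜 s).HasOrthogonalProjection] {v v' : E}
    (h : ∀ u ∈ s, inner 𝕜 u v = inner 𝕜 u v') :
    (span 𝕜 s).orthogonalProjectionOnto v = (span 𝕜 s).orthogonalProjectionOnto v' := by
  rw [← sub_eq_zero, ← map_sub, orthogonalProjectionOnto_eq_zero_iff,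
    mem_orthogonal_span_iff]
  intro u hu
  rw [inner_sub_right, h u hu, sub_self]

theorem Submodule.exists_orthogonalProjectionOnto_span_eq_smul {ι : Type*} [Nonempty ι]
    {s : Set E} [(span 𝕜 s).HasOrthogonalProjection] {u : ι → E} {a : 𝕜}
    (h : ∀ j, ∀ x ∈ s, inner 𝕜 x (u j) = a) :
    ∃ w : E, ∀ j, ((span 𝕜 s).orthogonalProjectionOnto (u j) : E) = a • w := by
  obtain ⟨j₀⟩ := ‹Nonempty ι›
  have hproj : ∀ j, (span 𝕜 s).orthogonalProjectionOnto (u j)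
      = (span 𝕜 s).orthogonalProjectionOnto (u j₀) := fun j =>
    orthogonalProjectionOnto_span_eq_of_inner_eq fun x hx => by rw [h j x hx, h j₀ x hx]
  rcases eq_or_ne a 0 with rfl | ha
  · refine ⟨0, fun j => ?_⟩
    have : (span 𝕜 s).orthogonalProjectionOnto (u j) = (span 𝕜 s).orthogonalProjectionOnto 0 :=
      orthogonalProjectionOnto_span_eq_of_inner_eq fun x hx => by rw [h j x hx, inner_zero_right]
    simp [this]
  · exact ⟨a⁻¹ • ((span 𝕜 s).orthogonalProjectionOnto (u j₀) : E), fun j => by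
      rw [hproj j, smul_smul, mul_inv_cancel₀ ha, one_smul]⟩

end Orthogonal

/-- Log-odds matching implies linearity: if for every concept vector `c` and every
context `d` not conditioning on concept `i`, the learned log-odds of concept `i`
equal a constant `α`, then the projections onto `span{f d : d i = ⋄}` of the
steering vectors `g(c_{i→1}) − g(c_{i→0})` are pairwise parallel (each equals
`α` times a fixed vector independent of `c`). -/
theorem log_odds_implies_linearity (n m : ℕ) (i : Fin m)
    (f : (Fin m → Option Bool) → EuclideanSpace ℝ (Fin n))
    (g : (Fin m → Bool) → EuclideanSpace ℝ (Fin n))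
    (phat : (Fin m → Option Bool) → (Fin m → Bool) → ℝ)
    (hphat : ∀ d c, phat d c
      = Real.exp (inner ℝ (f d) (g c) : ℝ) / ∑ c', Real.exp (inner ℝ (f d) (g c') : ℝ))
    (α : ℝ)
    (hlogodds : ∀ (c : Fin m → Bool) (d : Fin m → Option Bool), d i = none →
      Real.log (phat d (Function.update c i false) / phat d (Function.update c i true)) = α)
    (S : Submodule ℝ (EuclideanSpace ℝ (Fin n)))
    (hS : S = Submodule.span ℝ (f '' {d | d i = none})) :
    ∃ w : EuclideanSpace ℝ (Fin n), ∀ c : Fin m → Bool,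
      (S.orthogonalProjection
        (g (Function.update c i true) - g (Function.update c i false)) :
          EuclideanSpace ℝ (Fin n)) = α • w := by
  have hinner : ∀ c, ∀ x ∈ f '' {d | d i = none},
      inner ℝ x (g (Function.update c i true) - g (Function.update c i false)) = -α := by
    rintro c _ ⟨d, hd, rfl⟩
    have h := hlogodds c d hd
    rw [hphat, hphat] at h
    have hlog := Real.log_softmax_div_softmax (fun c' => inner ℝ (f d) (g c'))
      (Function.update c i false) (Function.update c i true)
    rw [inner_sub_right]
    linarith
  subst hS
  obtain ⟨w, hw⟩ := exists_orthogonalProjectionOnto_span_eq_smul hinner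
  exact ⟨-w, fun c => by rw [hw c, neg_smul, smul_neg]⟩
end

section
/- Consider the coupled recursions V_{t+1} = V_t + Kηℓ_t Δ_t and Δ_{t+1} = Δ_t + 2ηℓ_t V_t in ℝ^d with ℓ_t > 0, η > 0, K > 0. Define q_t² = ‖V_t‖²/‖Δ_t‖² (assuming ⟨V_t, Δ_t⟩ > 0 and both nonzero). If q_t² < K/2 then q_{t+1}² > q_t², and if q_t² > K/2 then q_{t+1}² < q_t². -/
/-! With `t = ηℓ`, `a = ‖V‖²`, `c = ‖Δ‖²` and `s = ⟪V, Δ⟫`, expanding the squared norms gives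
`‖V'‖² c − a ‖Δ'‖² = (K c − 2 a) (2 t s + t² (K c + 2 a))`, i.e.
`q'² − q² = (K/2 − q²) · 2 (2 t s + t² (K c + 2 a)) / ‖Δ'‖²`.
The last factor is positive because `s > 0`, so `q'² − q²` has the sign of `K/2 − q²`. -/

open RealInnerProductSpace

variable {E : Type*} [NormedAddCommGroup E] [InnerProductSpace ℝ E]

theorem norm_add_smul_sq_real (x y : E) (r : ℝ) :
    ‖x + r • y‖ ^ 2 = ‖x‖ ^ 2 + 2 * r * ⟪x, y⟫ + r ^ 2 * ‖y‖ ^ 2 := by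
  rw [norm_add_sq_real, real_inner_smul_right, norm_smul, mul_pow, Real.norm_eq_abs, sq_abs]
  ring

theorem norm_sq_pos_of_inner_pos {x y : E} (h : 0 < ⟪x, y⟫) : 0 < ‖y‖ ^ 2 := by
  have hy : y ≠ 0 := by
    rintro rfl
    simp at h
  positivity

theorem exists_pos_normSq_ratio_sub_eq {V Δ : E} {K t : ℝ} (hs : 0 < ⟪V, Δ⟫) (ht : 0 < t)
    (hK : 0 ≤ K) :
    ∃ κ > 0, ‖V + (K * t) • Δ‖ ^ 2 / ‖Δ + (2 * t) • V‖ ^ 2 - ‖V‖ ^ 2 / ‖Δ‖ ^ 2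
      = (K / 2 - ‖V‖ ^ 2 / ‖Δ‖ ^ 2) * κ := by
  have hc := norm_sq_pos_of_inner_pos hs
  have hc' : 0 < ‖Δ + (2 * t) • V‖ ^ 2 := by
    refine norm_sq_pos_of_inner_pos (x := V) ?_
    rw [inner_add_right, real_inner_smul_right, real_inner_self_eq_norm_sq]
    positivity
  refine ⟨2 * (2 * t * ⟪V, Δ⟫ + t ^ 2 * (K * ‖Δ‖ ^ 2 + 2 * ‖V‖ ^ 2)) / ‖Δ + (2 * t) • V‖ ^ 2,
    by positivity, ?_⟩
  rw [norm_add_smul_sq_real Δ V, real_inner_comm V Δ] at hc' ⊢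
  rw [norm_add_smul_sq_real V Δ]
  generalize ‖Δ‖ ^ 2 = c at hc hc' ⊢
  field_simp
  ring

theorem ratio_moves_to_half_K_general (n : ℕ) (η ℓ K : ℝ)
    (hη : 0 < η) (hℓ : 0 < ℓ) (hK : 0 < K)
    (V Δ V' Δ' : EuclideanSpace ℝ (Fin n))
    (hipos : (0 : ℝ) < (inner ℝ V Δ : ℝ))
    (hV' : V' = V + (K * η * ℓ) • Δ)
    (hΔ' : Δ' = Δ + (2 * η * ℓ) • V) :
    (‖V‖ ^ 2 / ‖Δ‖ ^ 2 < K / 2 → ‖V'‖ ^ 2 / ‖Δ'‖ ^ 2 > ‖V‖ ^ 2 / ‖Δ‖ ^ 2)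
    ∧ (‖V‖ ^ 2 / ‖Δ‖ ^ 2 > K / 2 → ‖V'‖ ^ 2 / ‖Δ'‖ ^ 2 < ‖V‖ ^ 2 / ‖Δ‖ ^ 2) := by
  obtain ⟨κ, hκ, hq⟩ := exists_pos_normSq_ratio_sub_eq (K := K) hipos (mul_pos hη hℓ) hK.le
  rw [← mul_assoc, ← mul_assoc, ← hV', ← hΔ'] at hq
  exact ⟨fun h ↦ sub_pos.1 (hq ▸ mul_pos (sub_pos.2 h) hκ),
    fun h ↦ sub_neg.1 (hq ▸ mul_neg_of_neg_of_pos (sub_neg.2 h) hκ)⟩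

/-- For the coupled recursions `V' = V + KηℓΔ`, `Δ' = Δ + 2ηℓV` with positive
scalars and `⟨V,Δ⟩ > 0`, the ratio `q² = ‖V‖²/‖Δ‖²` moves toward `K/2`:
it increases when below `K/2` and decreases when above. -/
theorem ratio_moves_to_half_K (n : ℕ) (η ℓ K : ℝ)
    (hη : 0 < η) (hℓ : 0 < ℓ) (hK : 0 < K)
    (V Δ V' Δ' : EuclideanSpace ℝ (Fin n))
    (hVne : V ≠ 0) (hΔne : Δ ≠ 0)
    (hipos : (0 : ℝ) < (inner ℝ V Δ : ℝ))
    (hV' : V' = V + (K * η * ℓ) • Δ)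
    (hΔ' : Δ' = Δ + (2 * η * ℓ) • V) :
    (‖V‖ ^ 2 / ‖Δ‖ ^ 2 < K / 2 → ‖V'‖ ^ 2 / ‖Δ'‖ ^ 2 > ‖V‖ ^ 2 / ‖Δ‖ ^ 2)
    ∧ (‖V‖ ^ 2 / ‖Δ‖ ^ 2 > K / 2 → ‖V'‖ ^ 2 / ‖Δ'‖ ^ 2 < ‖V‖ ^ 2 / ‖Δ‖ ^ 2) :=
  ratio_moves_to_half_K_general n η ℓ K hη hℓ hK V Δ V' Δ' hipos hV' hΔ'
end

section
/- Let u_{t+1} = u_t + ηL(t)v_t, v_{t+1} = v_t + ηL(t)u_t with L(t) = exp(-⟨u_t,v_t⟩) and suppose ⟨u_t,v_t⟩ > 0 for all t ≥ t_p, and 0 < ηL(t) < 1. If L(t) ≥ c₁ > 0 for all t ≥ t_p, then ⟨u_T, v_T⟩ ≥ ⟨u_{t_p}, v_{t_p}⟩ + (T − t_p)·η²c₁²⟨u_{t_p}, v_{t_p}⟩, so ⟨u_T, v_T⟩ → ∞ as T → ∞. Consequently L(t) → 0 (since L(t) bounded away from 0 yields the contradiction exp(−⟨u_T,v_T⟩)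 → 0 < c₁). -/
/-!
Expanding the update gives
`⟨u_{t+1}, v_{t+1}⟩ = ⟨u_t, v_t⟩ + ηL(t)(‖u_t‖² + ‖v_t‖²) + (ηL(t))²⟨u_t, v_t⟩`,
so as long as `⟨u_t, v_t⟩ > 0` and `L(t) ≥ c₁`, each step multiplies `⟨u_t, v_t⟩` by at least
`1 + (ηc₁)²`. A sequence growing at least geometrically from a positive value grows at least
linearly, hence diverges, and then `L(t) = exp(-⟨u_t, v_t⟩) → 0`.
-/

open Filter

section InnerProduct

variable {E : Type*} [NormedAddCommGroup E] [InnerProductSpace ℝ E]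

theorem inner_add_smul_add_smul (x y : E) (a : ℝ) :
    inner ℝ (x + a • y) (y + a • x)
      = inner ℝ x y + a * (‖x‖ ^ 2 + ‖y‖ ^ 2) + a ^ 2 * inner ℝ x y := by
  simp only [inner_add_left, inner_add_right, real_inner_smul_left, real_inner_smul_right,
    real_inner_self_eq_norm_sq, real_inner_comm x y]
  ring

theorem inner_add_sq_mul_inner_le_inner_add_smul_add_smul (x y : E) {a b : ℝ}
    (hb : 0 ≤ b) (hba : b ≤ a) (hxy : 0 ≤ inner ℝ x y) :
    inner ℝ x y + b ^ 2 * inner ℝ x y ≤ inner ℝ (x + a • y) (y + a • x) := by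
  rw [inner_add_smul_add_smul]
  have hsq : b ^ 2 ≤ a ^ 2 := pow_le_pow_left₀ hb hba 2
  have hnorm : 0 ≤ a * (‖x‖ ^ 2 + ‖y‖ ^ 2) := by positivity [hb.trans hba]
  nlinarith

end InnerProduct

section GeometricGrowth

variable {f : ℕ → ℝ} {δ : ℝ} {t₀ : ℕ}

theorem add_sub_mul_le_of_add_mul_self_le (hδ : 0 ≤ δ) (h₀ : 0 ≤ f t₀)
    (hgrowth : ∀ t ≥ t₀, f t + δ * f t ≤ f (t + 1)) {T : ℕ} (hT : t₀ ≤ T) :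
    f t₀ + ((T : ℝ) - t₀) * δ * f t₀ ≤ f T := by
  induction T, hT using Nat.le_induction with
  | base => simp
  | succ T hT ih =>
    have hT' : (t₀ : ℝ) ≤ T := by exact_mod_cast hT
    have hmono : f t₀ ≤ f T := by nlinarith [mul_nonneg (sub_nonneg.2 hT') (mul_nonneg hδ h₀)]
    have := hgrowth T hT
    push_cast
    nlinarith [mul_le_mul_of_nonneg_left hmono hδ]

theorem tendsto_atTop_of_add_mul_self_le (hδ : 0 < δ) (h₀ : 0 < f t₀)
    (hgrowth : ∀ t ≥ t₀, f t + δ * f t ≤ f (t + 1)) : Tendsto f atTop atTop := by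
  have hslope : 0 < δ * f t₀ := mul_pos hδ h₀
  have hlinear : Tendsto (fun T : ℕ => f t₀ - t₀ * (δ * f t₀) + T * (δ * f t₀)) atTop atTop :=
    tendsto_atTop_add_const_left _ _ (tendsto_natCast_atTop_atTop.atTop_mul_const hslope)
  refine tendsto_atTop_mono' _ ?_ hlinear
  filter_upwards [eventually_ge_atTop t₀] with T hT
  linarith [add_sub_mul_le_of_add_mul_self_le hδ.le h₀.le hgrowth hT]

end GeometricGrowth

/-- If along the gradient descent iterates on `L(u,v) = exp(-⟨u,v⟩)` one has
`⟨uₜ,vₜ⟩ > 0`, `0 < ηL(t) < 1` and `L(t) ≥ c₁ > 0` for all `t ≥ t_p`, then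
`⟨u_T,v_T⟩ ≥ ⟨u_{t_p},v_{t_p}⟩ + (T − t_p)η²c₁²⟨u_{t_p},v_{t_p}⟩`, hence
`⟨u_T,v_T⟩ → ∞`; consequently `L(t) → 0`. -/
theorem loss_tendsto_zero (d : ℕ) (η : ℝ)
    (u v : ℕ → EuclideanSpace ℝ (Fin d))
    (L : ℕ → ℝ) (hLdef : ∀ t, L t = Real.exp (-(inner ℝ (u t) (v t) : ℝ)))
    (hu : ∀ t, u (t + 1) = u t + (η * L t) • v t)
    (hv : ∀ t, v (t + 1) = v t + (η * L t) • u t)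
    (tp : ℕ)
    (hipos : ∀ t ≥ tp, (0 : ℝ) < (inner ℝ (u t) (v t) : ℝ))
    (hstep : ∀ t ≥ tp, 0 < η * L t ∧ η * L t < 1)
    (c₁ : ℝ) (hc₁ : 0 < c₁) (hLlb : ∀ t ≥ tp, c₁ ≤ L t) :
    (∀ T ≥ tp, (inner ℝ (u T) (v T) : ℝ)
        ≥ (inner ℝ (u tp) (v tp) : ℝ)
          + ((T : ℝ) - (tp : ℝ)) * η ^ 2 * c₁ ^ 2 * (inner ℝ (u tp) (v tp) : ℝ))
    ∧ Tendsto (fun t => (inner ℝ (u t) (v t) : ℝ)) atTop atTop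
    ∧ Tendsto L atTop (nhds 0) := by
  have hη : 0 < η :=
    pos_of_mul_pos_left (hstep tp le_rfl).1 (hLdef tp ▸ Real.exp_pos _).le
  have hgrowth : ∀ t ≥ tp, inner ℝ (u t) (v t) + (η * c₁) ^ 2 * inner ℝ (u t) (v t)
      ≤ inner ℝ (u (t + 1)) (v (t + 1)) := fun t ht => by
    rw [hu, hv]
    exact inner_add_sq_mul_inner_le_inner_add_smul_add_smul _ _ (by positivity)
      (mul_le_mul_of_nonneg_left (hLlb t ht) hη.le) (hipos t ht).le
  have hδ : 0 < (η * c₁) ^ 2 := by positivity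
  have hdiverge := tendsto_atTop_of_add_mul_self_le hδ (hipos tp le_rfl) hgrowth
  refine ⟨fun T hT => ?_, hdiverge, ?_⟩
  · simpa only [mul_pow, ← mul_assoc] using
      add_sub_mul_le_of_add_mul_self_le hδ.le (hipos tp le_rfl).le hgrowth hT
  · rw [show L = _ from funext hLdef]
    exact Real.tendsto_exp_neg_atTop_nhds_zero.comp hdiverge
end
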